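/- Categorical data with missing data can be contextual: there exists a table T : Fin 16 → (Option Bool)^4 whose available-case pairwise marginal counts for the four contexts {A,B}, {A,B'}, {A',B}, {A',B'} form a compatible family (all four one-variable available-case marginals over each context agree on overlaps up to proportion) but which cannot be realized as the exact pairwise marginal counts of any complete table T' : Fin 8 → Bool^4 with no missing data. -/

import Mathlib

/-!
In a complete table the rows where A' ≠ B' are covered by the rows where A' ≠ B, A ≠ B or
A ≠ B', since equality is transitive; counting gives the CHSH-type inequality
#(A' ≠ B') ≤ #(A' ≠ B) + #(A ≠ B) + #(A ≠ B'). The Bell family violates it (6 > 2 + 0 + 2),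
while the available-case marginals of Table 2 are all uniform, hence compatible.
-/

/-- A row of a table with possibly missing binary data in columns A, B, A', B'. -/
abbrev Row5 := Option Bool × Option Bool × Option Bool × Option Bool

/-- Available-case pairwise marginal count of two columns of a 16-row table. -/
def acount (T : Fin 16 → Row5) (f g : Row5 → Option Bool) (x y : Bool) : ℕ :=
  (Finset.univ.filter (fun i => f (T i) = some x ∧ g (T i) = some y)).card

/-- One-variable marginal (onto the first column of the pair) of the
available-case pairwise count of a context. -/
def acmarg1 (T : Fin 16 → Row5) (f g : Row5 → Option Bool) (x : Bool) : ℕ :=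
  acount T f g x false + acount T f g x true

/-- Total count of a context pairwise table. -/
def actot (T : Fin 16 → Row5) (f g : Row5 → Option Bool) : ℕ :=
  acmarg1 T f g false + acmarg1 T f g true

/-- Exact pairwise marginal count of a complete 8-row table. -/
def cmarg (T' : Fin 8 → Bool × Bool × Bool × Bool)
    (f g : Bool × Bool × Bool × Bool → Bool) (x y : Bool) : ℕ :=
  (Finset.univ.filter (fun i => f (T' i) = x ∧ g (T' i) = y)).card

def cA : Row5 → Option Bool := fun r => r.1
def cB : Row5 → Option Bool := fun r => r.2.1
def cA' : Row5 → Option Bool := fun r => r.2.2.1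
def cB' : Row5 → Option Bool := fun r => r.2.2.2

open Finset

theorem card_filter_ne_le_add {ι α : Type*} [Fintype ι] [DecidableEq ι] [DecidableEq α]
    (a b a' b' : ι → α) :
    #{i | a' i ≠ b' i} ≤ #{i | a' i ≠ b i} + #{i | a i ≠ b i} + #{i | a i ≠ b' i} := by
  set D : (ι → α) → (ι → α) → Finset ι := fun u v => {i | u i ≠ v i}
  have hcover : D a' b' ⊆ D a' b ∪ D a b ∪ D a b' := by
    intro i
    simp only [D, mem_union, mem_filter, mem_univ, true_and]
    contrapose!
    rintro ⟨⟨h₁, h₂⟩, h₃⟩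
    rw [h₁, ← h₂, h₃]
  calc #(D a' b') ≤ #(D a' b ∪ D a b) + #(D a b') :=
        (card_le_card hcover).trans (card_union_le _ _)
    _ ≤ #(D a' b) + #(D a b) + #(D a b') := by gcongr; exact card_union_le _ _

theorem card_filter_bool_ne {ι : Type*} [Fintype ι] (u v : ι → Bool) :
    #{i | u i ≠ v i} = #{i | u i = true ∧ v i = false} + #{i | u i = false ∧ v i = true} := by
  simp only [card_filter, ← sum_add_distrib]
  refine sum_congr rfl fun i _ => ?_
  cases u i <;> cases v i <;> rfl

theorem cmarg_chsh (T' : Fin 8 → Bool × Bool × Bool × Bool)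
    (a b a' b' : Bool × Bool × Bool × Bool → Bool) :
    cmarg T' a' b' true false + cmarg T' a' b' false true ≤
      (cmarg T' a' b true false + cmarg T' a' b false true) +
      (cmarg T' a b true false + cmarg T' a b false true) +
      (cmarg T' a b' true false + cmarg T' a b' false true) := by
  have hcard (u v : Bool × Bool × Bool × Bool → Bool) :
      cmarg T' u v true false + cmarg T' u v false true = #{i | u (T' i) ≠ v (T' i)} :=
    (card_filter_bool_ne (u ∘ T') (v ∘ T')).symm
  simp only [hcard]
  exact card_filter_ne_le_add (a ∘ T') (b ∘ T') (a' ∘ T') (b' ∘ T')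

/-- Table 2 of the paper; its available-case pairwise counts for {A,B}, {A,B'}, {A',B},
{A',B'} are the Bell family [[4,0],[0,4]], [[3,1],[1,3]], [[3,1],[1,3]], [[1,3],[3,1]]. -/
def bellTable : Fin 16 → Row5 :=
  ![(some false, some false, none, some false),
    (some false, some false, none, some false),
    (some false, some false, none, some false),
    (some false, some false, none, some true),
    (some true, some true, none, some false),
    (some true, some true, none, some true),
    (some true, some true, none, some true),
    (some true, some true, none, some true),
    (none, some false, some false, some true),
    (none, some false, some false, some true),
    (none, some false, some false, some true),
    (none, some true, some false, some false),
    (none, some false, some true, some false),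
    (none, some true, some true, some false),
    (none, some true, some true, some false),
    (none, some true, some true, some true)]

theorem missing_data_can_be_contextual :
    ∃ T : Fin 16 → Row5,
      -- compatibility on overlaps, up to proportion:
      -- contexts {A,B} and {A,B'} share A
      (∀ x : Bool, acmarg1 T cA cB x * actot T cA cB' =
        acmarg1 T cA cB' x * actot T cA cB) ∧
      -- contexts {A,B} and {A',B} share B
      (∀ x : Bool, acmarg1 T cB cA x * actot T cB cA' =
        acmarg1 T cB cA' x * actot T cB cA) ∧
      -- contexts {A,B'} and {A',B'} share B'
      (∀ x : Bool, acmarg1 T cB' cA x * actot T cB' cA' =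
        acmarg1 T cB' cA' x * actot T cB' cA) ∧
      -- contexts {A',B} and {A',B'} share A'
      (∀ x : Bool, acmarg1 T cA' cB x * actot T cA' cB' =
        acmarg1 T cA' cB' x * actot T cA' cB) ∧
      -- but no complete table realizes the available-case pairwise counts
      ¬ ∃ T' : Fin 8 → Bool × Bool × Bool × Bool,
          (∀ x y : Bool, cmarg T' (fun r => r.1) (fun r => r.2.1) x y =
            acount T cA cB x y) ∧
          (∀ x y : Bool, cmarg T' (fun r => r.2.2.1) (fun r => r.2.1) x y =
            acount T cA' cB x y) ∧
          (∀ x y : Bool, cmarg T' (fun r => r.1) (fun r => r.2.2.2) x y =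
            acount T cA cB' x y) ∧
          (∀ x y : Bool, cmarg T' (fun r => r.2.2.1) (fun r => r.2.2.2) x y =
            acount T cA' cB' x y) := by
  refine ⟨bellTable, by decide, by decide, by decide, by decide, ?_⟩
  rintro ⟨T', hAB, hA'B, hAB', hA'B'⟩
  have hchsh := cmarg_chsh T' (fun r => r.1) (fun r => r.2.1) (fun r => r.2.2.1) (fun r => r.2.2.2)
  rw [hAB, hAB, hA'B, hA'B, hAB', hAB', hA'B', hA'B'] at hchsh
  exact absurd hchsh (by decide)
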